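/- Let A be an N×N complex symmetric matrix (A = Aᵀ), and let the COCG iteration applied to A x = b with initial guess x_0 generate sequences r_n, p_n and scalars α_n = (r_nᵀ r_n)/(p_nᵀ A p_n), β_n = (r_{n+1}ᵀ r_{n+1})/(r_nᵀ r_n). Fix k ≥ 1 and assume no breakdown up to step k, i.e. r_nᵀ r_n ≠ 0 and p_nᵀ A p_n ≠ 0 for all n < k. Then for every n ≤ k, the residual r_n is conjugate-orthogonal to the Krylov subspace K_n(A, r_0): r_nᵀ v = 0 for all v ∈ K_n(A, r_0), where uᵀv denotes the unconjugated bilinear form Σ_j u_j v_j. -/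

import Mathlib

open Matrix

/-- The `n`-th Krylov subspace `K_n(A, b) = span {b, Ab, …, A^(n-1) b}`. -/
noncomputable def Krylov {N : ℕ} (A : Matrix (Fin N) (Fin N) ℂ) (b : Fin N → ℂ) (n : ℕ) :
    Submodule ℂ (Fin N → ℂ) :=
  Submodule.span ℂ {v | ∃ j < n, v = (A ^ j).mulVec b}

theorem stmt_8 {N : ℕ} (A : Matrix (Fin N) (Fin N) ℂ) (hA : Aᵀ = A)
    (b x₀ : Fin N → ℂ) (r p : ℕ → Fin N → ℂ) (α β : ℕ → ℂ)
    (hr0 : r 0 = b - A.mulVec x₀)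
    (hp0 : p 0 = r 0)
    (hp : ∀ n, p (n + 1) = r (n + 1) + β n • p n)
    (hα : ∀ n, α n = (r n ⬝ᵥ r n) / (p n ⬝ᵥ A.mulVec (p n)))
    (hr : ∀ n, r (n + 1) = r n - α n • A.mulVec (p n))
    (hβ : ∀ n, β n = (r (n + 1) ⬝ᵥ r (n + 1)) / (r n ⬝ᵥ r n))
    (k : ℕ) (hk : 1 ≤ k)
    (hbreak : ∀ n < k, r n ⬝ᵥ r n ≠ 0 ∧ p n ⬝ᵥ A.mulVec (p n) ≠ 0) :
    ∀ n ≤ k, ∀ v ∈ Krylov A (r 0) n, r n ⬝ᵥ v = 0 := by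
  -- symmetry of the bilinear form
  have hsym : ∀ u w : Fin N → ℂ, A.mulVec u ⬝ᵥ w = u ⬝ᵥ A.mulVec w := by
    intro u w
    rw [Matrix.dotProduct_mulVec, ← Matrix.vecMul_transpose, hA]
  -- α nonzero below k
  have hαne : ∀ n < k, α n ≠ 0 := by
    intro n hn
    rw [hα n]
    exact div_ne_zero (hbreak n hn).1 (hbreak n hn).2
  -- express r in terms of p
  have hrp_eq : ∀ n, r (n + 1) = p (n + 1) - β n • p n := by
    intro n
    exact eq_sub_of_add_eq (hp n).symm
  -- express A p n in terms of residuals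
  have hAp : ∀ n < k, A.mulVec (p n) = (α n)⁻¹ • (r n - r (n + 1)) := by
    intro n hn
    have h1 : α n • A.mulVec (p n) = r n - r (n + 1) := by
      rw [hr n]; abel
    rw [← h1, smul_smul, inv_mul_cancel₀ (hαne n hn), one_smul]
  -- r n ⬝ᵥ p j = 0 for all j < n implies r n ⬝ᵥ r j = 0 for all j < n
  have hrp_to_rr : ∀ m, (∀ j < m, r m ⬝ᵥ p j = 0) → ∀ j < m, r m ⬝ᵥ r j = 0 := by
    intro m h j hj
    match j with
    | 0 => rw [← hp0]; exact h 0 hj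
    | (i+1) =>
      rw [hrp_eq i, dotProduct_sub, dotProduct_smul, h (i+1) hj, h i (by omega),
        smul_zero, sub_zero]
  -- main orthogonality induction
  have key : ∀ n ≤ k, ∀ j < n, r n ⬝ᵥ p j = 0 ∧ p n ⬝ᵥ A.mulVec (p j) = 0 := by
    intro n
    induction n with
    | zero => intro _ j hj; omega
    | succ n ih =>
      intro hn
      have hnk : n < k := hn
      have ihn := ih (le_of_lt hnk)
      -- r n ⬝ᵥ p n = r n ⬝ᵥ r n
      have hrpn_rn : r n ⬝ᵥ p n = r n ⬝ᵥ r n := by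
        match n with
        | 0 => rw [hp0]
        | (m+1) =>
          rw [hp m, dotProduct_add, dotProduct_smul,
            (ihn m (by omega)).1, smul_zero, add_zero]
      -- first invariant at n+1
      have hrpn : ∀ j < n + 1, r (n + 1) ⬝ᵥ p j = 0 := by
        intro j hj
        rw [hr n, sub_dotProduct, smul_dotProduct, hsym]
        rcases Nat.lt_or_ge j n with hjn | hjn
        · rw [(ihn j hjn).1, (ihn j hjn).2, smul_zero, sub_zero]
        · have hjn' : n = j := by omega
          subst hjn'
          rw [hrpn_rn, hα n, smul_eq_mul, div_mul_cancel₀ _ (hbreak n hnk).2, sub_self]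
      have hrrn : ∀ j < n + 1, r (n + 1) ⬝ᵥ r j = 0 := hrp_to_rr (n + 1) hrpn
      -- second invariant at n+1
      have hconj : ∀ j < n + 1, p (n + 1) ⬝ᵥ A.mulVec (p j) = 0 := by
        intro j hj
        have hjk : j < k := lt_of_lt_of_le hj hn
        rw [hp n, add_dotProduct, smul_dotProduct, hAp j hjk]
        rcases Nat.lt_or_ge j n with hjn | hjn
        · have h1 : r (n + 1) ⬝ᵥ (α j)⁻¹ • (r j - r (j + 1)) = 0 := by
            rw [dotProduct_smul, dotProduct_sub, hrrn j hj, hrrn (j + 1) (by omega),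
              sub_self, smul_zero]
          have h2 : p n ⬝ᵥ (α j)⁻¹ • (r j - r (j + 1)) = 0 := by
            rw [← hAp j hjk]
            exact (ihn j hjn).2
          rw [h1, h2, smul_zero, add_zero]
        · have hjn' : n = j := by omega
          subst hjn'
          have h1 : r (n + 1) ⬝ᵥ (α n)⁻¹ • (r n - r (n + 1)) =
              -(α n)⁻¹ * (r (n + 1) ⬝ᵥ r (n + 1)) := by
            rw [dotProduct_smul, dotProduct_sub, hrrn n (by omega)]
            ring_nf
          have h2 : p n ⬝ᵥ (α n)⁻¹ • (r n - r (n + 1)) = p n ⬝ᵥ A.mulVec (p n) := by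
            rw [← hAp n hnk]
          rw [h1, h2, smul_eq_mul, hβ n, hα n, inv_div]
          have hc : r n ⬝ᵥ r n ≠ 0 := (hbreak n hnk).1
          field_simp
          ring
      intro j hj
      exact ⟨hrpn j hj, hconj j hj⟩
  -- span of the p's
  set S : ℕ → Submodule ℂ (Fin N → ℂ) :=
    fun m => Submodule.span ℂ {v | ∃ j < m, v = p j} with hS
  have hSmono : ∀ {m m'}, m ≤ m' → S m ≤ S m' := by
    intro m m' hmm
    apply Submodule.span_mono
    rintro v ⟨j, hj, rfl⟩
    exact ⟨j, by omega, rfl⟩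
  have hpS : ∀ j m, j < m → p j ∈ S m := by
    intro j m hj
    exact Submodule.subset_span ⟨j, hj, rfl⟩
  have hrS : ∀ m, r m ∈ S (m + 1) := by
    intro m
    match m with
    | 0 => rw [← hp0]; exact hpS 0 1 (by omega)
    | (i+1) =>
      rw [hrp_eq i]
      exact sub_mem (hpS (i+1) (i+2) (by omega))
        (Submodule.smul_mem _ _ (hpS i (i+2) (by omega)))
  -- A maps S (j+1) into S (j+2) as long as j + 1 ≤ k ... (indices < k)
  have hAS : ∀ m ≤ k, ∀ w ∈ S m, A.mulVec w ∈ S (m + 1) := by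
    intro m hm w hw
    induction hw using Submodule.span_induction with
    | mem v hv =>
      obtain ⟨j, hj, rfl⟩ := hv
      have hjk : j < k := lt_of_lt_of_le hj hm
      rw [hAp j hjk]
      exact Submodule.smul_mem _ _ (sub_mem
        (hSmono (by omega) (hrS j))
        (hSmono (by omega) (hrS (j + 1))))
    | zero => rw [Matrix.mulVec_zero]; exact zero_mem _
    | add u v _ _ hu hv => rw [Matrix.mulVec_add]; exact add_mem hu hv
    | smul c u _ hu => rw [Matrix.mulVec_smul]; exact Submodule.smul_mem _ _ hu
  have hAK : ∀ j < k, (A ^ j).mulVec (r 0) ∈ S (j + 1) := by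
    intro j hj
    induction j with
    | zero =>
      rw [pow_zero, Matrix.one_mulVec, ← hp0]
      exact hpS 0 1 (by omega)
    | succ j ihj =>
      rw [pow_succ', ← Matrix.mulVec_mulVec]
      exact hAS (j + 1) (by omega) _ (ihj (by omega))
  -- conclusion
  intro n hn v hv
  have horthS : ∀ w ∈ S n, r n ⬝ᵥ w = 0 := by
    intro w hw
    induction hw using Submodule.span_induction with
    | mem u hu =>
      obtain ⟨j, hj, rfl⟩ := hu
      exact (key n hn j hj).1
    | zero => exact dotProduct_zero _
    | add u u' _ _ hu hu' => rw [dotProduct_add, hu, hu', add_zero]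
    | smul c u _ hu => rw [dotProduct_smul, hu, smul_zero]
  apply horthS
  have hKS : Krylov A (r 0) n ≤ S n := by
    rw [Krylov, Submodule.span_le]
    rintro u ⟨j, hj, rfl⟩
    exact hSmono (by omega) (hAK j (lt_of_lt_of_le hj hn))
  exact hKS hv
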